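/- Monotonicity of the optimal peak level in the trade-off weight: let 0 ≤ σ̃ < σ, let u_σ ∈ S_u be optimal for the objective J_σ and u_σ̃ ∈ S_u be optimal for J_σ̃ (both from the same initial inventory x₀), with trajectories x_σ and x_σ̃ respectively. Then the optimal peak levels satisfy sup_{s∈[0,T]} x_σ(s) ≤ sup_{s∈[0,T]} x_σ̃(s). -/
import Mathlib


open MeasureTheory Set
open scoped NNReal

noncomputable section

/-- Combined holding/shortage cost with holding factor `Ch` and shortage factor `Cs`. -/
def holding (Ch Cs x : ℝ) : ℝ := if x < 0 then Cs * x ^ 2 else Ch * x ^ 2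

/-- Membership in the reduced policy space `S_u`. -/
def memSu (T a : ℝ) (α β : ℝ → ℝ) (u : ℝ → ℝ) : Prop :=
  Measurable u ∧ ∀ t ∈ Icc (0 : ℝ) T, 0 ≤ u t ∧ u t ≤ α t / (2 * a * β t)

/-- Inventory trajectory under production rate `u` (with `γ(t) = 1 + aβ(t)`). -/
def trajU (a : ℝ) (α β : ℝ → ℝ) (x₀ : ℝ) (u : ℝ → ℝ) (t : ℝ) : ℝ :=
  x₀ + ∫ s in (0 : ℝ)..t, (u s * (1 + a * β s) - α s / 2)

/-- The objective `J_σ(u)` over the reduced policy space. -/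
def JobjU (T a σ Ch Cs ChT CsT : ℝ) (α β : ℝ → ℝ) (x₀ : ℝ) (u : ℝ → ℝ) : ℝ :=
  (∫ s in (0 : ℝ)..T,
    (-(a * u s ^ 2 * (1 + a * β s)) + α s ^ 2 / (4 * β s)
      - holding Ch Cs (trajU a α β x₀ u s)))
  - holding ChT CsT (trajU a α β x₀ u T)
  - σ * sSup (trajU a α β x₀ u '' Icc 0 T)

/-- monotonicity of the optimal peak level in the trade-off weight:
if `0 ≤ σ̃ < σ` and `u_σ`, `u_σ̃` are optimal for `J_σ`, `J_σ̃` respectively,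
then the peak of the `σ`-optimal trajectory is at most that of the `σ̃`-optimal one. -/
theorem optimal_peak_antitone_in_weight
    (T a Ch Cs ChT CsT : ℝ)
    (hT : 0 < T) (ha : 0 < a)
    (hCh : 0 < Ch) (hCs : 0 < Cs) (hChT : 0 < ChT) (hCsT : 0 < CsT)
    (α β : ℝ → ℝ)
    (hαLip : ∃ K : ℝ≥0, LipschitzOnWith K α (Icc 0 T))
    (hβLip : ∃ K : ℝ≥0, LipschitzOnWith K β (Icc 0 T))
    (hα : ∀ t ∈ Icc (0 : ℝ) T, 0 < α t) (hβ : ∀ t ∈ Icc (0 : ℝ) T, 0 < β t)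
    (x₀ : ℝ)
    (σtld σ : ℝ) (hσtld : 0 ≤ σtld) (hlt : σtld < σ)
    (uσ : ℝ → ℝ) (hmemσ : memSu T a α β uσ)
    (hoptσ : ∀ u : ℝ → ℝ, memSu T a α β u →
      JobjU T a σ Ch Cs ChT CsT α β x₀ u ≤ JobjU T a σ Ch Cs ChT CsT α β x₀ uσ)
    (uσtld : ℝ → ℝ) (hmemσtld : memSu T a α β uσtld)
    (hoptσtld : ∀ u : ℝ → ℝ, memSu T a α β u →
      JobjU T a σtld Ch Cs ChT CsT α β x₀ u ≤ JobjU T a σtld Ch Cs ChT CsT α β x₀ uσtld) :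
    sSup (trajU a α β x₀ uσ '' Icc 0 T) ≤ sSup (trajU a α β x₀ uσtld '' Icc 0 T) := by
  have h1 := hoptσ uσtld hmemσtld
  have h2 := hoptσtld uσ hmemσ
  unfold JobjU at h1 h2
  nlinarith [h1, h2, sub_pos.mpr hlt]
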